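/- arXiv:0806.4553 — 4 statements merged into one kernel-verified Lean document; each statement's English description precedes it below -/
import Mathlib

section
/- The theory of posets is convex with respect to {≤, ≈}: if Γ is a conjunction of ground atoms over {≤, ≈} with constants, and Γ entails a disjunction R₁(s₁,t₁) ∨ ... ∨ Rₘ(sₘ,tₘ) of atoms (each Rᵢ ∈ {≤, ≈}) in all posets, then Γ entails Rⱼ(sⱼ,tⱼ) for some single j. -/
/-!
Semantic entailment of `≤`-atoms by `Γ` is itself a preorder on the constants, and its
antisymmetrization, with each constant interpreted as its own class, is a poset model of `Γ`.
An atom holds in this canonical model exactly when `Γ` entails it, so the disjunct of `D`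
that holds there is entailed by `Γ` on its own.
-/

/-- The two relation symbols of the theory of posets: `≤` and `≈`. -/
inductive PRel : Type
  | le : PRel
  | eq : PRel

/-- A ground atom `lhs R rhs` over `{≤, ≈}` with constants from `C`. -/
structure PAtom (C : Type) : Type where
  rel : PRel
  lhs : C
  rhs : C

/-- Truth of a ground atom in a poset `α` under an interpretation `v` of the constants. -/
def PAtom.holds {C α : Type} [PartialOrder α] (v : C → α) (a : PAtom C) : Prop :=
  match a.rel with
  | .le => v a.lhs ≤ v a.rhs
  | .eq => v a.lhs = v a.rhs

namespace PAtom

variable {C : Type}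

def Entails (Γ : List (PAtom C)) (a : PAtom C) : Prop :=
  ∀ (α : Type) [PartialOrder α] (v : C → α), (∀ g ∈ Γ, g.holds v) → a.holds v

/-- The constants, preordered by entailed `≤`. -/
def EntailedOrder (_Γ : List (PAtom C)) : Type := C

instance (Γ : List (PAtom C)) : Preorder (EntailedOrder Γ) where
  le s t := Entails Γ ⟨.le, s, t⟩
  le_refl _ _ _ _ _ := le_rfl
  le_trans _ _ _ hst htu α _ v hv := (hst α v hv).trans (htu α v hv)

abbrev CanonicalModel (Γ : List (PAtom C)) : Type :=
  Antisymmetrization (EntailedOrder Γ) (· ≤ ·)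

def canonicalVal (Γ : List (PAtom C)) (c : C) : CanonicalModel Γ :=
  toAntisymmetrization (· ≤ ·) (show EntailedOrder Γ from c)

lemma canonicalVal_le_iff {Γ : List (PAtom C)} {s t : C} :
    canonicalVal Γ s ≤ canonicalVal Γ t ↔ Entails Γ ⟨.le, s, t⟩ :=
  toAntisymmetrization_le_toAntisymmetrization_iff

theorem holds_canonicalVal_iff {Γ : List (PAtom C)} {a : PAtom C} :
    a.holds (canonicalVal Γ) ↔ Entails Γ a := by
  obtain ⟨rel, s, t⟩ := a
  cases rel with
  | le => exact canonicalVal_le_iff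
  | eq =>
    show canonicalVal Γ s = canonicalVal Γ t ↔
      ∀ (α : Type) [PartialOrder α] (v : C → α), (∀ g ∈ Γ, g.holds v) → v s = v t
    simp only [le_antisymm_iff, canonicalVal_le_iff]
    exact ⟨fun ⟨hst, hts⟩ α _ v hv => ⟨hst α v hv, hts α v hv⟩,
      fun h => ⟨fun α _ v hv => (h α v hv).1, fun α _ v hv => (h α v hv).2⟩⟩

theorem canonicalVal_models (Γ : List (PAtom C)) : ∀ g ∈ Γ, g.holds (canonicalVal Γ) :=
  fun _ hg => holds_canonicalVal_iff.2 fun _ _ _ hv => hv _ hg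

end PAtom

open PAtom in
/-- The theory of posets is convex with respect to `{≤, ≈}`: if a conjunction `Γ` of
ground atoms entails a disjunction of atoms `D` in all posets, then `Γ` already entails
a single disjunct. -/
theorem poset_convex {C : Type} (Γ D : List (PAtom C))
    (hent : ∀ (α : Type) [PartialOrder α] (v : C → α),
      (∀ g ∈ Γ, g.holds v) → ∃ d ∈ D, d.holds v) :
    ∃ d ∈ D, ∀ (α : Type) [PartialOrder α] (v : C → α),
      (∀ g ∈ Γ, g.holds v) → d.holds v := by
  obtain ⟨d, hd, hdΓ⟩ := hent _ (canonicalVal Γ) (canonicalVal_models Γ)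
  exact ⟨d, hd, holds_canonicalVal_iff.1 hdΓ⟩
end

section
/- Let P be a poset, f : Pⁿ ⇀ P and g : Pⁿ ⇀ P partial functions such that whenever f(u₁,...,uₙ) and g(v₁,...,vₙ) are both defined and uᵢ ≤ vᵢ for all i, then f(u₁,...,uₙ) ≤ g(v₁,...,vₙ); assume also f is weakly monotone. Define on the poset OI(P) of order ideals: F(U₁,...,Uₙ) = downward closure of { f(u) : uᵢ ∈ Uᵢ, f(u) defined }, and G(U₁,...,Uₙ) = ↓g(x₁,...,xₙ) if Uᵢ = ↓xᵢ for all i and g(x₁,...,xₙ) is defined, and G(U₁,...,Uₙ) = F(U₁,...,Uₙ) otherwise. Then F is monotone and for all tuples of ideals with Uᵢ ⊆ Vᵢ we have F(U₁,...,Uₙ) ⊆ G(V₁,...,Vₙ). -/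
/-- `idealImage f U` is the downward closure of the set of values of the partial
function `f` on tuples drawn from the sets `U i`. -/
def idealImage {n : ℕ} {P : Type} [Preorder P] (f : (Fin n → P) →. P)
    (U : Fin n → Set P) : Set P :=
  { x | ∃ u : Fin n → P, (∀ i, u i ∈ U i) ∧ ∃ h : (f u).Dom, x ≤ (f u).get h }

open Classical in
/-- The extension `G` of the partial function `g` to order ideals: on a tuple of
principal ideals `↓x₁, …, ↓xₙ` at which `g` is defined it returns `↓g(x)`,
and otherwise it falls back to `idealImage f`. -/
noncomputable def idealG {n : ℕ} {P : Type} [PartialOrder P]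
    (f g : (Fin n → P) →. P) (U : Fin n → Set P) : Set P :=
  if h : ∃ x : Fin n → P, (∀ i, U i = Set.Iic (x i)) ∧ (g x).Dom
  then Set.Iic ((g h.choose).get h.choose_spec.2)
  else idealImage f U

section IdealExtension

variable {n : ℕ} {P : Type}

theorem idealImage_mono [Preorder P] (f : (Fin n → P) →. P) {U V : Fin n → Set P}
    (hUV : ∀ i, U i ⊆ V i) : idealImage f U ⊆ idealImage f V := by
  rintro x ⟨u, hu, hdom, hx⟩
  exact ⟨u, fun i => hUV i (hu i), hdom, hx⟩

theorem idealImage_subset_Iic [Preorder P] {f : (Fin n → P) →. P} {U : Fin n → Set P} {y : P}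
    (hy : ∀ u, (∀ i, u i ∈ U i) → ∀ hu : (f u).Dom, (f u).get hu ≤ y) :
    idealImage f U ⊆ Set.Iic y := by
  rintro x ⟨u, hu, hdom, hx⟩
  exact hx.trans (hy u hu hdom)

theorem subset_idealG [PartialOrder P] {f g : (Fin n → P) →. P} {V : Fin n → Set P}
    {S : Set P} (hS : S ⊆ idealImage f V)
    (hSg : ∀ x, (∀ i, V i = Set.Iic (x i)) → ∀ hx : (g x).Dom, S ⊆ Set.Iic ((g x).get hx)) :
    S ⊆ idealG f g V := by
  unfold idealG
  split_ifs with h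
  · exact hSg _ h.choose_spec.1 h.choose_spec.2
  · exact hS

theorem idealImage_subset_idealG [PartialOrder P] {f g : (Fin n → P) →. P}
    (hleq : ∀ (u v : Fin n → P) (hu : (f u).Dom) (hv : (g v).Dom),
      (∀ i, u i ≤ v i) → (f u).get hu ≤ (g v).get hv)
    {U V : Fin n → Set P} (hUV : ∀ i, U i ⊆ V i) :
    idealImage f U ⊆ idealG f g V := by
  refine subset_idealG (idealImage_mono f hUV) fun x hVx hx => idealImage_subset_Iic ?_
  intro u hu hdom
  exact hleq u x hdom hx fun i => by simpa only [hVx i, Set.mem_Iic] using hUV i (hu i)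

end IdealExtension

theorem leq_mon_ideal_extension_general {n : ℕ} {P : Type} [PartialOrder P]
    (f g : (Fin n → P) →. P)
    (hleq : ∀ (u v : Fin n → P) (hu : (f u).Dom) (hv : (g v).Dom),
      (∀ i, u i ≤ v i) → (f u).get hu ≤ (g v).get hv) :
    (∀ U V : Fin n → Set P, (∀ i, U i ⊆ V i) → idealImage f U ⊆ idealImage f V) ∧
    (∀ U V : Fin n → Set P, (∀ i, IsLowerSet (U i)) → (∀ i, IsLowerSet (V i)) →
      (∀ i, U i ⊆ V i) → idealImage f U ⊆ idealG f g V) :=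
  ⟨fun _ _ hUV => idealImage_mono f hUV,
    fun _ _ _ _ hUV => idealImage_subset_idealG hleq hUV⟩

/-- Embeddability lemma for `Leq(f,g) ∧ Mon(f)`: if `f, g : Pⁿ ⇀ P` are partial
functions on a poset with `f(u) ≤ g(v)` whenever both are defined and `u ≤ v`
componentwise, and `f` is weakly monotone, then on order ideals `F = idealImage f`
is monotone and `F(U) ⊆ G(V)` whenever `Uᵢ ⊆ Vᵢ` for all `i`. -/
theorem leq_mon_ideal_extension {n : ℕ} {P : Type} [PartialOrder P]
    (f g : (Fin n → P) →. P)
    (hleq : ∀ (u v : Fin n → P) (hu : (f u).Dom) (hv : (g v).Dom),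
      (∀ i, u i ≤ v i) → (f u).get hu ≤ (g v).get hv)
    (hmono : ∀ (u v : Fin n → P) (hu : (f u).Dom) (hv : (f v).Dom),
      (∀ i, u i ≤ v i) → (f u).get hu ≤ (f v).get hv) :
    (∀ U V : Fin n → Set P, (∀ i, U i ⊆ V i) → idealImage f U ⊆ idealImage f V) ∧
    (∀ U V : Fin n → Set P, (∀ i, IsLowerSet (U i)) → (∀ i, IsLowerSet (V i)) →
      (∀ i, U i ⊆ V i) → idealImage f U ⊆ idealG f g V) :=
  leq_mon_ideal_extension_general f g hleq
end

section
/- Let B be a Boolean algebra and A, C conjunctions of equations between Boolean terms over two sets of constants sharing some common constants, with a occurring only in A and b occurring only in C. If A ∧ C entails a ≤ b in all Boolean algebras, then there exists a Boolean term t built only from constants common to A and C such that A ∧ C entails a ≤ t and t ≤ b in all Boolean algebras. -/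
/-- Boolean terms over a set `C` of constants, built with `∧, ∨, ¬, 0, 1`. -/
inductive BTerm (C : Type) : Type
  | const : C → BTerm C
  | and : BTerm C → BTerm C → BTerm C
  | or : BTerm C → BTerm C → BTerm C
  | not : BTerm C → BTerm C
  | top : BTerm C
  | bot : BTerm C

/-- Evaluation of a Boolean term in a Boolean algebra under an interpretation of constants. -/
def BTerm.eval {C α : Type} [BooleanAlgebra α] (v : C → α) : BTerm C → α
  | .const c => v c
  | .and s t => s.eval v ⊓ t.eval v
  | .or s t => s.eval v ⊔ t.eval v
  | .not s => (s.eval v)ᶜ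
  | .top => ⊤
  | .bot => ⊥

/-- The constants occurring in a Boolean term. -/
def BTerm.consts {C : Type} : BTerm C → Set C
  | .const c => {c}
  | .and s t => s.consts ∪ t.consts
  | .or s t => s.consts ∪ t.consts
  | .not s => s.consts
  | .top => ∅
  | .bot => ∅

/-- The constants occurring in a conjunction of equations between Boolean terms. -/
def beqConsts {C : Type} (A : List (BTerm C × BTerm C)) : Set C :=
  { c | ∃ p ∈ A, c ∈ p.1.consts ∪ p.2.consts }

/-- `A ⊨_Bool s ≤ t`: in every Boolean algebra, every interpretation of the constants
satisfying all the equations of `A` satisfies `s ≤ t` (where `x ≤ y` abbreviates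
`x ⊓ y ≈ x`). -/
def boolEntailsLe {C : Type} (A : List (BTerm C × BTerm C)) (s t : BTerm C) : Prop :=
  ∀ (α : Type) [BooleanAlgebra α] (v : C → α),
    (∀ p ∈ A, p.1.eval v = p.2.eval v) → s.eval v ≤ t.eval v

/-!
The interpolant is `∃ x̄. (⋀ A ∧ a)`, where `x̄` are the constants of `A` not occurring in `C`;
the quantifiers are eliminated by Boole's expansion `∃ x. φ = φ[⊤/x] ∨ φ[⊥/x]`. Checking the two
entailments in the two-element algebra is then a matter of gluing valuations. This suffices because
`Bool` is complete for entailment: if `s ≰ t` in some Boolean algebra, a prime ideal containing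
`t` but not `s` yields a homomorphism to `Bool` refuting the entailment there.
-/

open Order

section PrimeIdeal

lemma Order.Ideal.IsPrime.inf_mem_iff {P : Type*} [SemilatticeInf P] {I : Ideal P}
    (hI : I.IsPrime) {x y : P} : x ⊓ y ∈ I ↔ x ∈ I ∨ y ∈ I :=
  ⟨hI.mem_or_mem, fun h => h.elim (I.lower inf_le_left) (I.lower inf_le_right)⟩

variable {α : Type*} [Lattice α] [BoundedOrder α] {I : Ideal α}

open scoped Classical in
noncomputable def Order.Ideal.IsPrime.toBoolHom (hI : I.IsPrime) : BoundedLatticeHom α Bool where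
  toFun x := decide (x ∉ I)
  map_sup' x y := by simp [sup_mem_iff]
  map_inf' x y := by simp [hI.inf_mem_iff, not_or]
  map_top' := by simp [hI.top_notMem]
  map_bot' := by simp

open scoped Classical in
@[simp]
lemma Order.Ideal.IsPrime.toBoolHom_apply (hI : I.IsPrime) (x : α) :
    hI.toBoolHom x = decide (x ∉ I) := rfl

end PrimeIdeal

namespace BTerm

variable {C : Type}

lemma eval_map {α β : Type} [BooleanAlgebra α] [BooleanAlgebra β] (f : BoundedLatticeHom α β)
    (v : C → α) (t : BTerm C) : f (t.eval v) = t.eval (f ∘ v) := by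
  induction t with
  | const c => rfl
  | and s t ihs iht => simp [eval, ihs, iht]
  | or s t ihs iht => simp [eval, ihs, iht]
  | not s ihs => simp [eval, ihs]
  | top => simp [eval]
  | bot => simp [eval]

lemma eval_congr {α : Type} [BooleanAlgebra α] {v w : C → α} (t : BTerm C)
    (h : ∀ c ∈ t.consts, v c = w c) : t.eval v = t.eval w := by
  induction t with
  | const c => exact h c rfl
  | and s t ihs iht | or s t ihs iht =>
    simp only [eval, ihs fun c hc => h c (.inl hc), iht fun c hc => h c (.inr hc)]
  | not s ihs => simp only [eval, ihs h]
  | top | bot => rfl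

lemma consts_finite (t : BTerm C) : t.consts.Finite := by
  induction t with
  | const c => exact Set.finite_singleton c
  | and s t ihs iht | or s t ihs iht => exact ihs.union iht
  | not s ihs => exact ihs
  | top | bot => exact Set.finite_empty

def bind (σ : C → BTerm C) : BTerm C → BTerm C
  | .const c => σ c
  | .and s t => .and (s.bind σ) (t.bind σ)
  | .or s t => .or (s.bind σ) (t.bind σ)
  | .not s => .not (s.bind σ)
  | .top => .top
  | .bot => .bot

lemma eval_bind {α : Type} [BooleanAlgebra α] (σ : C → BTerm C) (v : C → α) (t : BTerm C) :
    (t.bind σ).eval v = t.eval fun c => (σ c).eval v := by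
  induction t with
  | const c => rfl
  | and s t ihs iht | or s t ihs iht => simp only [bind, eval, ihs, iht]
  | not s ihs => simp only [bind, eval, ihs]
  | top | bot => rfl

lemma mem_consts_bind {σ : C → BTerm C} {c : C} {t : BTerm C} (h : c ∈ (t.bind σ).consts) :
    ∃ d ∈ t.consts, c ∈ (σ d).consts := by
  induction t with
  | const d => exact ⟨d, rfl, h⟩
  | and s t ihs iht | or s t ihs iht =>
    rcases h with h | h
    · obtain ⟨d, hd, hc⟩ := ihs h; exact ⟨d, .inl hd, hc⟩
    · obtain ⟨d, hd, hc⟩ := iht h; exact ⟨d, .inr hd, hc⟩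
  | not s ihs => exact ihs h
  | top | bot => exact h.elim

def iff (s t : BTerm C) : BTerm C := .or (.and s t) (.and (.not s) (.not t))

def ofEqs (A : List (BTerm C × BTerm C)) : BTerm C :=
  A.foldr (fun p φ => .and (iff p.1 p.2) φ) .top

lemma eval_iff_bool (s t : BTerm C) (ε : C → Bool) :
    (iff s t).eval ε = true ↔ s.eval ε = t.eval ε := by
  simp only [iff, eval]
  cases s.eval ε <;> cases t.eval ε <;> decide

lemma eval_ofEqs_bool (A : List (BTerm C × BTerm C)) (ε : C → Bool) :
    (ofEqs A).eval ε = true ↔ ∀ p ∈ A, p.1.eval ε = p.2.eval ε := by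
  induction A with
  | nil => simp [ofEqs, eval]
  | cons p A ih =>
    simp only [ofEqs, List.foldr_cons] at ih ⊢
    simp [eval, eval_iff_bool, ih]

lemma consts_ofEqs (A : List (BTerm C × BTerm C)) : (ofEqs A).consts ⊆ beqConsts A := by
  induction A with
  | nil => simp [ofEqs, consts]
  | cons p A ih =>
    intro c hc
    simp only [ofEqs, List.foldr_cons, iff, consts, Set.union_self] at hc ih
    rcases hc with hc | hc
    · exact ⟨p, List.mem_cons_self, hc⟩
    · obtain ⟨q, hq, hcq⟩ := ih hc
      exact ⟨q, List.mem_cons_of_mem _ hq, hcq⟩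

section Forget

variable [DecidableEq C]

/-- `∃ c. φ`, by Boole's expansion. -/
def forget (c : C) (φ : BTerm C) : BTerm C :=
  .or (φ.bind (Function.update BTerm.const c .top)) (φ.bind (Function.update BTerm.const c .bot))

def forgetList (L : List C) (φ : BTerm C) : BTerm C :=
  L.foldr forget φ

lemma eval_update_const {α : Type} [BooleanAlgebra α] (c : C) (u : BTerm C) (v : C → α) (d : C) :
    (Function.update BTerm.const c u d).eval v = Function.update v c (u.eval v) d :=
  Function.apply_update (fun _ t => t.eval v) BTerm.const c u d

lemma eval_forget {α : Type} [BooleanAlgebra α] (c : C) (φ : BTerm C) (v : C → α) :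
    (forget c φ).eval v = φ.eval (Function.update v c ⊤) ⊔ φ.eval (Function.update v c ⊥) := by
  simp only [forget, eval, eval_bind, eval_update_const]

lemma consts_forget (c : C) (φ : BTerm C) : (forget c φ).consts ⊆ φ.consts \ {c} := by
  rintro x (hx | hx) <;>
  · obtain ⟨d, hd, hx⟩ := mem_consts_bind hx
    by_cases hdc : d = c
    · subst hdc; simp [consts] at hx
    · simp only [Function.update_of_ne hdc, consts, Set.mem_singleton_iff] at hx
      exact ⟨hx ▸ hd, hx ▸ hdc⟩

lemma consts_forgetList (L : List C) (φ : BTerm C) :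
    (forgetList L φ).consts ⊆ φ.consts \ {c | c ∈ L} := by
  induction L with
  | nil => simp [forgetList]
  | cons c L ih =>
    intro x hx
    obtain ⟨hx, hxc⟩ := consts_forget c _ hx
    obtain ⟨hx, hxL⟩ := ih hx
    exact ⟨hx, by simp_all⟩

lemma eval_forget_bool (c : C) (φ : BTerm C) (ε : C → Bool) :
    (forget c φ).eval ε = true ↔ ∃ b, φ.eval (Function.update ε c b) = true := by
  simp [eval_forget, Bool.exists_bool, or_comm]

lemma eval_forgetList_bool (L : List C) (φ : BTerm C) (ε : C → Bool) :
    (forgetList L φ).eval ε = true ↔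
      ∃ ε' : C → Bool, (∀ c, c ∉ L → ε' c = ε c) ∧ φ.eval ε' = true := by
  induction L generalizing ε with
  | nil =>
    exact ⟨fun h => ⟨ε, fun _ _ => rfl, h⟩, fun ⟨_, h, hφ⟩ => funext (h · List.not_mem_nil) ▸ hφ⟩
  | cons c L ih =>
    simp only [forgetList, List.foldr_cons] at ih ⊢
    rw [eval_forget_bool]
    simp only [ih]
    constructor
    · rintro ⟨b, ε', hε', hφ⟩
      refine ⟨ε', fun x hx => ?_, hφ⟩
      rw [hε' x (fun h => hx (List.mem_cons_of_mem _ h)),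
        Function.update_of_ne (by rintro rfl; exact hx List.mem_cons_self)]
    · rintro ⟨ε', hε', hφ⟩
      refine ⟨ε' c, ε', fun x hx => ?_, hφ⟩
      by_cases hxc : x = c
      · subst hxc; simp
      · rw [Function.update_of_ne hxc, hε' x (by simp [hxc, hx])]

end Forget

end BTerm

open BTerm

lemma boolEntailsLe_iff_bool {C : Type} {A : List (BTerm C × BTerm C)} {s t : BTerm C} :
    boolEntailsLe A s t ↔
      ∀ ε : C → Bool, (∀ p ∈ A, p.1.eval ε = p.2.eval ε) → s.eval ε ≤ t.eval ε := by
  refine ⟨fun h => h Bool, fun h α _ v hv => ?_⟩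
  by_contra hst
  obtain ⟨J, hJ, htJ, hsJ⟩ := DistribLattice.prime_ideal_of_disjoint_filter_ideal
    (F := PFilter.principal (s.eval v)) (I := Ideal.principal (t.eval v))
    (Set.disjoint_left.2 fun x hs ht => hst (le_trans hs ht))
  have hle := h (hJ.toBoolHom ∘ v) fun p hp => by rw [← eval_map, ← eval_map, hv p hp]
  rw [← eval_map, ← eval_map] at hle
  have hs : s.eval v ∉ J := Set.disjoint_left.1 hsJ (PFilter.mem_principal.2 le_rfl)
  have ht : t.eval v ∈ J := htJ Ideal.mem_principal_self
  exact absurd hle (by simp [hs, ht])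

theorem bool_le_interpolating_general {Cst : Type} (A C : List (BTerm Cst × BTerm Cst)) (a b : Cst)
    (haA : a ∈ beqConsts A)
    (hbC : b ∈ beqConsts C)
    (hent : boolEntailsLe (A ++ C) (.const a) (.const b)) :
    ∃ t : BTerm Cst, t.consts ⊆ beqConsts A ∩ beqConsts C ∧
      boolEntailsLe (A ++ C) (.const a) t ∧
      boolEntailsLe (A ++ C) t (.const b) := by
  classical
  let φ : BTerm Cst := .and (ofEqs A) (.const a)
  let L := (φ.consts_finite.toFinset.filter (· ∉ beqConsts C)).toList
  have hL {c : Cst} : c ∈ L ↔ c ∈ φ.consts ∧ c ∉ beqConsts C := by simp [L]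
  refine ⟨φ.forgetList L, fun c hc => ?_, ?_, ?_⟩
  · obtain ⟨hcφ, hcL⟩ := consts_forgetList L φ hc
    refine ⟨?_, by_contra fun hcC => hcL (hL.2 ⟨hcφ, hcC⟩)⟩
    rcases hcφ with hc | rfl
    exacts [consts_ofEqs A hc, haA]
  · refine boolEntailsLe_iff_bool.2 fun ε hε => Bool.le_iff_imp.2 fun ha => ?_
    have hA : ∀ p ∈ A, p.1.eval ε = p.2.eval ε := fun p hp => hε p (List.mem_append_left C hp)
    exact (eval_forgetList_bool L φ ε).2
      ⟨ε, fun _ _ => rfl, Bool.and_eq_true_iff.2 ⟨(eval_ofEqs_bool A ε).2 hA, ha⟩⟩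
  · refine boolEntailsLe_iff_bool.2 fun ε hε => Bool.le_iff_imp.2 fun ht => ?_
    obtain ⟨ε', hε', hφ⟩ := (eval_forgetList_bool L φ ε).1 ht
    obtain ⟨hA, ha⟩ := Bool.and_eq_true_iff.1 hφ
    rw [eval_ofEqs_bool] at hA
    have hC (p) (hp : p ∈ C) : p.1.eval ε' = p.2.eval ε' := by
      have hagree (c) (hc : c ∈ p.1.consts ∪ p.2.consts) : ε' c = ε c :=
        hε' c fun hcL => (hL.1 hcL).2 ⟨p, hp, hc⟩
      rw [eval_congr p.1 fun c hc => hagree c (.inl hc),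
        eval_congr p.2 fun c hc => hagree c (.inr hc)]
      exact hε p (List.mem_append_right A hp)
    have hb : ε' b = true := Bool.le_iff_imp.1 (hent Bool ε' (List.forall_mem_append.2 ⟨hA, hC⟩)) ha
    rwa [hε' b fun hbL => (hL.1 hbL).2 hbC] at hb

/-- The theory of Boolean algebras is `{≤}`-interpolating: if `A ∧ C` entails `a ≤ b`
in all Boolean algebras, where the constant `a` occurs only in `A` and `b` only in `C`,
then there is a Boolean term `t` over constants common to `A` and `C` with
`A ∧ C ⊨ a ≤ t` and `A ∧ C ⊨ t ≤ b`. -/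
theorem bool_le_interpolating {Cst : Type} (A C : List (BTerm Cst × BTerm Cst)) (a b : Cst)
    (haA : a ∈ beqConsts A) (haC : a ∉ beqConsts C)
    (hbC : b ∈ beqConsts C) (hbA : b ∉ beqConsts A)
    (hent : boolEntailsLe (A ++ C) (.const a) (.const b)) :
    ∃ t : BTerm Cst, t.consts ⊆ beqConsts A ∩ beqConsts C ∧
      boolEntailsLe (A ++ C) (.const a) t ∧
      boolEntailsLe (A ++ C) t (.const b) :=
  bool_le_interpolating_general A C a b haA hbC hent
end

section
/- In the theory of pure equality (no function symbols), if A and B are conjunctions of ground (dis)equations between constants with A ∧ B unsatisfiable, then there exists a ground formula I over the constants common to A and B (a Boolean combination of equations between common constants) such that every model of A satisfies I and I ∧ B is unsatisfiable. -/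
/-- A ground literal of the theory of pure equality: a possibly negated equation
between constants. -/
structure EqLit (C : Type) : Type where
  pos : Bool
  lhs : C
  rhs : C

/-- Truth of a ground equality literal under an interpretation `v : C → α`. -/
def EqLit.holds {C α : Type} (v : C → α) (l : EqLit C) : Prop :=
  if l.pos then v l.lhs = v l.rhs else v l.lhs ≠ v l.rhs

/-- The constants occurring in a conjunction (list) of equality literals. -/
def eqLitConsts {C : Type} (A : List (EqLit C)) : Set C :=
  { c | ∃ l ∈ A, l.lhs = c ∨ l.rhs = c }

/-- Ground formulas of pure equality: Boolean combinations of equations between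
constants. -/
inductive EqFm (C : Type) : Type
  | eq : C → C → EqFm C
  | not : EqFm C → EqFm C
  | and : EqFm C → EqFm C → EqFm C
  | or : EqFm C → EqFm C → EqFm C
  | tru : EqFm C
  | fls : EqFm C

/-- Truth of a ground equality formula under an interpretation `v : C → α`. -/
def EqFm.holds {C α : Type} (v : C → α) : EqFm C → Prop
  | .eq c d => v c = v d
  | .not φ => ¬ φ.holds v
  | .and φ ψ => φ.holds v ∧ ψ.holds v
  | .or φ ψ => φ.holds v ∨ ψ.holds v
  | .tru => True
  | .fls => False

/-- The constants occurring in a ground equality formula. -/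
def EqFm.consts {C : Type} : EqFm C → Set C
  | .eq c d => {c, d}
  | .not φ => φ.consts
  | .and φ ψ => φ.consts ∪ ψ.consts
  | .or φ ψ => φ.consts ∪ ψ.consts
  | .tru => ∅
  | .fls => ∅

/-! If `A` is satisfiable, the interpolant is the conjunction of all literals over the shared
constants that `A` entails. Given a model `v` of `B` and of this conjunction, amalgamate it with
the term model of the equations entailed by `A`: a constant that `A` proves equal to some constant
`s` of `B` is sent to `v s`, every other constant to its entailment class. This is well defined
because a constant other than `c` that `A` proves equal to `c` must occur in `A` (otherwise it
could be reinterpreted by a fresh value), so two such anchors are shared and `v` respects the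
equation between them. -/

theorem EqLit.holds_congr {C α β : Type} {v : C → α} {w : C → β} {l : EqLit C}
    (h : v l.lhs = v l.rhs ↔ w l.lhs = w l.rhs) : l.holds v ↔ l.holds w := by
  unfold EqLit.holds
  split_ifs <;> simp [h]

def EqLit.toFm {C : Type} (l : EqLit C) : EqFm C :=
  if l.pos then .eq l.lhs l.rhs else .not (.eq l.lhs l.rhs)

theorem EqLit.holds_toFm {C α : Type} (v : C → α) (l : EqLit C) :
    l.toFm.holds v ↔ l.holds v := by
  unfold EqLit.toFm EqLit.holds
  split_ifs <;> rfl

theorem EqLit.consts_toFm {C : Type} (l : EqLit C) : l.toFm.consts = {l.lhs, l.rhs} := by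
  unfold EqLit.toFm
  split_ifs <;> rfl

def EqFm.conj {C : Type} (L : List (EqFm C)) : EqFm C :=
  L.foldr .and .tru

theorem EqFm.holds_conj {C α : Type} (v : C → α) (L : List (EqFm C)) :
    (EqFm.conj L).holds v ↔ ∀ φ ∈ L, φ.holds v := by
  induction L with
  | nil => simp [EqFm.conj, EqFm.holds]
  | cons φ L ih => simp [EqFm.conj, EqFm.holds, ← ih]

theorem EqFm.consts_conj {C : Type} (L : List (EqFm C)) :
    (EqFm.conj L).consts ⊆ ⋃ φ ∈ L, φ.consts := by
  induction L with
  | nil => simp [EqFm.conj, EqFm.consts]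
  | cons φ L ih =>
    simp only [EqFm.conj, List.foldr_cons, EqFm.consts, List.mem_cons,
      Set.iUnion_iUnion_eq_or_left]
    exact Set.union_subset_union_right _ ih

def eqLitConstList {C : Type} (A : List (EqLit C)) : List C :=
  A.flatMap fun l => [l.lhs, l.rhs]

theorem mem_eqLitConstList {C : Type} {A : List (EqLit C)} {c : C} :
    c ∈ eqLitConstList A ↔ c ∈ eqLitConsts A := by
  simp [eqLitConstList, eqLitConsts, eq_comm]

def eqLitsOver {C : Type} (L : List C) : List (EqLit C) :=
  L.flatMap fun c => L.flatMap fun d => [⟨true, c, d⟩, ⟨false, c, d⟩]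

theorem mem_eqLitsOver {C : Type} {L : List C} {l : EqLit C} :
    l ∈ eqLitsOver L ↔ l.lhs ∈ L ∧ l.rhs ∈ L := by
  obtain ⟨b, c, d⟩ := l
  cases b <;> simp [eqLitsOver]

namespace PureEquality

variable {C : Type}

def Satisfiable (A : List (EqLit C)) : Prop :=
  ∃ (α : Type) (v : C → α), ∀ l ∈ A, l.holds v

def Entails (A : List (EqLit C)) (l : EqLit C) : Prop :=
  ∀ (α : Type) (v : C → α), (∀ l ∈ A, l.holds v) → l.holds v

theorem entails_of_mem {A : List (EqLit C)} {l : EqLit C} (hl : l ∈ A) : Entails A l :=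
  fun _ _ hv => hv l hl

def entailedEq (A : List (EqLit C)) : Setoid C where
  r c d := Entails A ⟨true, c, d⟩
  iseqv :=
    { refl := fun _ _ _ _ => by simp [EqLit.holds]
      symm := fun h α v hv => by simpa [EqLit.holds, eq_comm] using h α v hv
      trans := fun h₁ h₂ α v hv => by
        simp only [EqLit.holds, if_true] at *
        exact (h₁ α v hv).trans (h₂ α v hv) }

theorem Entails.congr {A : List (EqLit C)} {b : Bool} {c d c' d' : C}
    (h : Entails A ⟨b, c, d⟩) (hc : entailedEq A c c') (hd : entailedEq A d d') :
    Entails A ⟨b, c', d'⟩ := by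
  intro α v hv
  have hcv := hc α v hv
  have hdv := hd α v hv
  have hv := h α v hv
  simp only [EqLit.holds, if_true] at hcv hdv hv ⊢
  rwa [← hcv, ← hdv]

theorem not_entails_eq_of_entails_ne {A : List (EqLit C)} (hA : Satisfiable A) {c d : C}
    (hne : Entails A ⟨false, c, d⟩) : ¬ entailedEq A c d := by
  intro heq
  obtain ⟨α, w, hw⟩ := hA
  have hne := hne α w hw
  have heq := heq α w hw
  simp only [EqLit.holds, if_true, Bool.false_eq_true, if_false] at hne heq
  exact hne heq

theorem mem_eqLitConsts_of_entailedEq {A : List (EqLit C)} (hA : Satisfiable A) {c d : C}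
    (h : entailedEq A c d) (hcd : c ≠ d) : d ∈ eqLitConsts A := by
  classical
  by_contra hd
  obtain ⟨α, w, hw⟩ := hA
  let w' : C → Option α := fun x => if x = d then none else some (w x)
  have hw' : ∀ l ∈ A, l.holds w' := fun l hl => by
    have hlhs : l.lhs ≠ d := fun e => hd ⟨l, hl, Or.inl e⟩
    have hrhs : l.rhs ≠ d := fun e => hd ⟨l, hl, Or.inr e⟩
    refine (EqLit.holds_congr ?_).2 (hw l hl)
    simp [w', hlhs, hrhs]
  simpa [EqLit.holds, w', hcd] using h _ w' hw'

theorem mem_eqLitConsts_of_entailedEq_of_mem {A : List (EqLit C)} (hA : Satisfiable A)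
    {c d : C} (h : entailedEq A c d) (hc : c ∈ eqLitConsts A) : d ∈ eqLitConsts A := by
  by_cases hcd : c = d
  · exact hcd ▸ hc
  · exact mem_eqLitConsts_of_entailedEq hA h hcd

def RespectsEntailed (A : List (EqLit C)) (T : Set C) {α : Type} (v : C → α) : Prop :=
  ∀ l : EqLit C, l.lhs ∈ eqLitConsts A ∩ T → l.rhs ∈ eqLitConsts A ∩ T →
    Entails A l → l.holds v

open Classical in
noncomputable def interpolant (A B : List (EqLit C)) : EqFm C :=
  EqFm.conj <| List.map EqLit.toFm <| (eqLitsOver (eqLitConstList A)).filter fun l =>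
    l.lhs ∈ eqLitConsts B ∧ l.rhs ∈ eqLitConsts B ∧ Entails A l

theorem holds_interpolant (A B : List (EqLit C)) {α : Type} (v : C → α) :
    (interpolant A B).holds v ↔ RespectsEntailed A (eqLitConsts B) v := by
  simp only [interpolant, EqFm.holds_conj, List.mem_map, List.mem_filter, mem_eqLitsOver,
    mem_eqLitConstList, decide_eq_true_eq, RespectsEntailed, Set.mem_inter_iff]
  constructor
  · intro h l ⟨hcA, hcB⟩ ⟨hdA, hdB⟩ hl
    exact (EqLit.holds_toFm v l).1 (h _ ⟨l, ⟨⟨hcA, hdA⟩, hcB, hdB, hl⟩, rfl⟩)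
  · rintro h _ ⟨l, ⟨⟨hcA, hdA⟩, hcB, hdB, hl⟩, rfl⟩
    exact (EqLit.holds_toFm v l).2 (h l ⟨hcA, hcB⟩ ⟨hdA, hdB⟩ hl)

theorem consts_interpolant (A B : List (EqLit C)) :
    (interpolant A B).consts ⊆ eqLitConsts A ∩ eqLitConsts B := by
  refine (EqFm.consts_conj _).trans ?_
  simp only [Set.iUnion_subset_iff, List.mem_map, List.mem_filter, mem_eqLitsOver,
    mem_eqLitConstList, decide_eq_true_eq]
  rintro _ ⟨l, ⟨⟨hcA, hdA⟩, hcB, hdB, -⟩, rfl⟩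
  rw [EqLit.consts_toFm, Set.insert_subset_iff, Set.singleton_subset_iff]
  exact ⟨⟨hcA, hcB⟩, hdA, hdB⟩

section Amalgamation

variable {A : List (EqLit C)} {T : Set C} {α : Type} {v : C → α}

noncomputable def amalgam (A : List (EqLit C)) (T : Set C) (v : C → α) (c : C) :
    α ⊕ Quotient (entailedEq A) :=
  open Classical in
  if h : ∃ s ∈ T, entailedEq A c s then .inl (v h.choose) else .inr (Quotient.mk _ c)

theorem amalgam_of_not_anchored {c : C} (h : ¬ ∃ s ∈ T, entailedEq A c s) :
    amalgam A T v c = .inr (Quotient.mk _ c) :=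
  dif_neg h

theorem amalgam_of_anchored (hA : Satisfiable A) (hv : RespectsEntailed A T v) {c s : C}
    (hs : s ∈ T) (hcs : entailedEq A c s) : amalgam A T v c = .inl (v s) := by
  have h : ∃ s ∈ T, entailedEq A c s := ⟨s, hs, hcs⟩
  rw [amalgam, dif_pos h, Sum.inl.injEq]
  obtain ⟨ht, hct⟩ := h.choose_spec
  generalize h.choose = t at ht hct
  have hts : entailedEq A t s := (entailedEq A).trans' ((entailedEq A).symm' hct) hcs
  by_cases heq : t = s
  · rw [heq]
  · have htA := mem_eqLitConsts_of_entailedEq hA ((entailedEq A).symm' hts) (Ne.symm heq)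
    have hsA := mem_eqLitConsts_of_entailedEq hA hts heq
    simpa [EqLit.holds] using hv ⟨true, t, s⟩ ⟨htA, ht⟩ ⟨hsA, hs⟩ hts

theorem amalgam_congr (hA : Satisfiable A) (hv : RespectsEntailed A T v) {c d : C}
    (hcd : entailedEq A c d) : amalgam A T v c = amalgam A T v d := by
  by_cases hc : ∃ s ∈ T, entailedEq A c s
  · obtain ⟨s, hs, hcs⟩ := hc
    have hds : entailedEq A d s := (entailedEq A).trans' ((entailedEq A).symm' hcd) hcs
    rw [amalgam_of_anchored hA hv hs hcs, amalgam_of_anchored hA hv hs hds]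
  · have hd : ¬ ∃ s ∈ T, entailedEq A d s := fun ⟨s, hs, hds⟩ =>
      hc ⟨s, hs, (entailedEq A).trans' hcd hds⟩
    rw [amalgam_of_not_anchored hc, amalgam_of_not_anchored hd, Quotient.sound hcd]

theorem amalgam_ne (hA : Satisfiable A) (hv : RespectsEntailed A T v) {c d : C}
    (hc : c ∈ eqLitConsts A) (hd : d ∈ eqLitConsts A) (hcd : Entails A ⟨false, c, d⟩) :
    amalgam A T v c ≠ amalgam A T v d := by
  by_cases hcT : ∃ s ∈ T, entailedEq A c s <;> by_cases hdT : ∃ t ∈ T, entailedEq A d t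
  · obtain ⟨s, hs, hcs⟩ := hcT
    obtain ⟨t, ht, hdt⟩ := hdT
    rw [amalgam_of_anchored hA hv hs hcs, amalgam_of_anchored hA hv ht hdt, ne_eq, Sum.inl.injEq]
    simpa [EqLit.holds] using hv ⟨false, s, t⟩
      ⟨mem_eqLitConsts_of_entailedEq_of_mem hA hcs hc, hs⟩
      ⟨mem_eqLitConsts_of_entailedEq_of_mem hA hdt hd, ht⟩ (hcd.congr hcs hdt)
  · obtain ⟨s, hs, hcs⟩ := hcT
    rw [amalgam_of_anchored hA hv hs hcs, amalgam_of_not_anchored hdT]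
    exact Sum.inl_ne_inr
  · obtain ⟨t, ht, hdt⟩ := hdT
    rw [amalgam_of_not_anchored hcT, amalgam_of_anchored hA hv ht hdt]
    exact Sum.inr_ne_inl
  · rw [amalgam_of_not_anchored hcT, amalgam_of_not_anchored hdT, ne_eq, Sum.inr.injEq,
      Quotient.eq]
    exact not_entails_eq_of_entails_ne hA hcd

theorem amalgam_models (hA : Satisfiable A) (hv : RespectsEntailed A T v) :
    ∀ l ∈ A, l.holds (amalgam A T v) := by
  rintro ⟨b, c, d⟩ hl
  cases b
  · exact amalgam_ne hA hv ⟨_, hl, Or.inl rfl⟩ ⟨_, hl, Or.inr rfl⟩ (entails_of_mem hl)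
  · exact amalgam_congr hA hv (entails_of_mem hl)

theorem amalgam_eq_amalgam_iff (hA : Satisfiable A) (hv : RespectsEntailed A T v) {c d : C}
    (hc : c ∈ T) (hd : d ∈ T) : amalgam A T v c = amalgam A T v d ↔ v c = v d := by
  rw [amalgam_of_anchored hA hv hc ((entailedEq A).refl' c),
    amalgam_of_anchored hA hv hd ((entailedEq A).refl' d), Sum.inl.injEq]

end Amalgamation

end PureEquality

open PureEquality in
/-- Ground interpolation for the theory of pure equality (no function symbols):
if `A ∧ B` is unsatisfiable (over all sets `α` and interpretations of the constants),
then there is a ground formula `I` — a Boolean combination of equations between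
constants common to `A` and `B` — such that every model of `A` satisfies `I` and
`I ∧ B` is unsatisfiable. -/
theorem pure_equality_ground_interpolation {C : Type} (A B : List (EqLit C))
    (hunsat : ¬ ∃ (α : Type) (v : C → α),
      (∀ l ∈ A, l.holds v) ∧ (∀ l ∈ B, l.holds v)) :
    ∃ I : EqFm C, I.consts ⊆ eqLitConsts A ∩ eqLitConsts B ∧
      (∀ (α : Type) (v : C → α), (∀ l ∈ A, l.holds v) → I.holds v) ∧
      ¬ ∃ (α : Type) (v : C → α), (∀ l ∈ B, l.holds v) ∧ I.holds v := by
  by_cases hA : Satisfiable A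
  · refine ⟨interpolant A B, consts_interpolant A B,
      fun α v hv => (holds_interpolant A B v).2 fun l _ _ hl => hl α v hv, ?_⟩
    rintro ⟨α, v, hvB, hvI⟩
    have hv := (holds_interpolant A B v).1 hvI
    refine hunsat ⟨_, amalgam A (eqLitConsts B) v, amalgam_models hA hv, fun l hl => ?_⟩
    exact (EqLit.holds_congr (amalgam_eq_amalgam_iff hA hv ⟨l, hl, Or.inl rfl⟩
      ⟨l, hl, Or.inr rfl⟩)).2 (hvB l hl)
  · exact ⟨.fls, by simp [EqFm.consts], fun α v hv => hA ⟨α, v, hv⟩,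
      fun ⟨_, _, _, h⟩ => h⟩
end
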